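/- For x ∈ X, the set η_x = {E(F;v) ∈ E_X : x ∈ C(F;v)} is an ultrafilter on the semilattice E_X, and every ultrafilter on E_X is of the form η_x for some x ∈ X. -/

import Mathlib

open Function

/-- The one-sided shift map on `ℕ → A`. -/
def shft {A : Type*} (x : ℕ → A) : ℕ → A := fun n => x (n + 1)

/-- Concatenation of a finite word `w` with an infinite word `x`. -/
def wcat {A : Type*} (w : List A) (x : ℕ → A) : ℕ → A :=
  fun n => w.getD n (x (n - w.length))

/-- Partial bijections on `ℕ → A` modelled as relations (sets of pairs (input, output)). -/
abbrev PB (A : Type*) := Set ((ℕ → A) × (ℕ → A))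

/-- Composition on the largest possible domain: `rcomp r s` applies `s` first, then `r`
(i.e. the semigroup product `r · s`). -/
def rcomp {A : Type*} (r s : PB A) : PB A := {p | ∃ y, (p.1, y) ∈ s ∧ (y, p.2) ∈ r}

/-- Inverse of a partial bijection. -/
def rinv {A : Type*} (r : PB A) : PB A := {p | (p.2, p.1) ∈ r}

/-- The identity map on a subset `U`. -/
def idOn {A : Type*} (U : Set (ℕ → A)) : PB A := {p | p.1 ∈ U ∧ p.2 = p.1}

/-- The partial bijection `s_μ : x ↦ μx` on `{x ∈ X : μx ∈ X}`. -/
def sMap {A : Type*} (X : Set (ℕ → A)) (μ : List A) : PB A :=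
  {p | p.1 ∈ X ∧ wcat μ p.1 ∈ X ∧ p.2 = wcat μ p.1}

/-- The cylinder set `C(v) = {vx : x ∈ A^ℕ} ∩ X`. -/
def Cyl {A : Type*} (X : Set (ℕ → A)) (v : List A) : Set (ℕ → A) :=
  {y | y ∈ X ∧ ∃ x, y = wcat v x}

/-- `C(μ,ν) = {νx ∈ X : μx ∈ X}`. -/
def Cmn {A : Type*} (X : Set (ℕ → A)) (μ ν : List A) : Set (ℕ → A) :=
  {y | ∃ x, y = wcat ν x ∧ y ∈ X ∧ wcat μ x ∈ X}

/-- `C(F;v) = {vx ∈ X : fx ∈ X for all f ∈ F}`. -/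
def CFv {A : Type*} (X : Set (ℕ → A)) (F : Finset (List A)) (v : List A) : Set (ℕ → A) :=
  {y | ∃ x, y = wcat v x ∧ y ∈ X ∧ ∀ f ∈ F, wcat f x ∈ X}

/-- The idempotent `E(F;v) = Id_{C(F;v)}`. -/
def Efv {A : Type*} (X : Set (ℕ → A)) (F : Finset (List A)) (v : List A) : PB A :=
  idOn (CFv X F v)

/-- The set `E_X = {E(F;v)} ∪ {0}` of idempotents. -/
def EXset {A : Type*} (X : Set (ℕ → A)) : Set (PB A) :=
  {r | r = ∅ ∨ ∃ (F : Finset (List A)) (v : List A), r = Efv X F v}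

/-- The element `s_α E(F;v) s_β^*` of `I(X)`. -/
def elt {A : Type*} (X : Set (ℕ → A)) (α : List A) (F : Finset (List A)) (v β : List A) :
    PB A :=
  rcomp (rcomp (sMap X α) (Efv X F v)) (rinv (sMap X β))

/-- The inverse semigroup `S_X = {s_α E(F;v) s_β^*} ∪ {0}` (closed form). -/
def SXset {A : Type*} (X : Set (ℕ → A)) : Set (PB A) :=
  {r | r = ∅ ∨ ∃ (α β v : List A) (F : Finset (List A)), r = elt X α F v β}

/-- `α` and `β` are in lowest terms: they do not both end with the same letter. -/
def LowTerms {A : Type*} (α β : List A) : Prop :=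
  ∀ a : A, ¬(α.getLast? = some a ∧ β.getLast? = some a)

/-- A word viewed as an element of the free group on `A`. -/
def wgrp {A : Type*} (w : List A) : FreeGroup A := (w.map FreeGroup.of).prod

/-- Natural partial order on partial bijections: `s ≤ t` iff `t s^* s = s`. -/
def rle {A : Type*} (s t : PB A) : Prop := rcomp t (rcomp (rinv s) s) = s

/-- `P_k(x) = {μ ∈ A^k : μx ∈ X}`. -/
def Pk {A : Type*} (X : Set (ℕ → A)) (k : ℕ) (x : ℕ → A) : Set (List A) :=
  {μ | μ.length = k ∧ wcat μ x ∈ X}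

/-- `l`-past equivalence: `P_r(x) = P_r(y)` for all `r ≤ l`. -/
def pastEq {A : Type*} (X : Set (ℕ → A)) (l : ℕ) (x y : ℕ → A) : Prop :=
  ∀ r ≤ l, Pk X r x = Pk X r y

/-- The relation `x ~_{(k,l)} y`. -/
def klEq {A : Type*} (X : Set (ℕ → A)) (k l : ℕ) (x y : ℕ → A) : Prop :=
  (∀ i < k, x i = y i) ∧ pastEq X l (shft^[k] x) (shft^[k] y)

/-- A filter on the idempotent semilattice `E_X`. -/
def IsFilt {A : Type*} (X : Set (ℕ → A)) (ξ : Set (PB A)) : Prop :=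
  ξ.Nonempty ∧ ξ ⊆ EXset X ∧ (∅ : PB A) ∉ ξ ∧
    (∀ e ∈ ξ, ∀ f ∈ ξ, rcomp e f ∈ ξ) ∧
    (∀ e ∈ ξ, ∀ f ∈ EXset X, rcomp e f = e → f ∈ ξ)

/-- An ultrafilter: a filter not properly contained in any other filter. -/
def IsUltra {A : Type*} (X : Set (ℕ → A)) (ξ : Set (PB A)) : Prop :=
  IsFilt X ξ ∧ ∀ ζ, IsFilt X ζ → ξ ⊆ ζ → ζ = ξ

/-- `η_x = {E(F;v) ∈ E_X : x ∈ C(F;v)}`. -/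
def etaF {A : Type*} (X : Set (ℕ → A)) (x : ℕ → A) : Set (PB A) :=
  {e | e ∈ EXset X ∧ (x, x) ∈ e}


/-!
A nonzero element of `E_X` is the identity on a closed set `C(F;v)`, and a product of two such
elements is the identity on the intersection `C(F;v) ∩ C(G;w)`, which is either empty or again of
the form `C(H;u)`, since one of `v`, `w` must extend the other.

So `η_x` is a filter. It is maximal because when `x ∉ C(F;v)`, the closedness of `C(F;v)` gives a
cylinder `C(w)` around `x` disjoint from it, and no filter contains both `E(F;v)` and
`E(∅;w) ∈ η_x`. Conversely, the sets `C(F;v)` with `E(F;v)` in an ultrafilter `ξ` form a downward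
directed family of nonempty closed subsets of the compact space `A^ℕ`. They therefore share a point
`x`, so `ξ ⊆ η_x`, and maximality gives `ξ = η_x`.
-/

open PiNat

section Wcat
variable {A : Type*}

lemma wcat_of_lt (w : List A) (x : ℕ → A) {n : ℕ} (h : n < w.length) :
    wcat w x n = w[n] :=
  List.getD_eq_getElem _ _ h

lemma wcat_of_le (w : List A) (x : ℕ → A) {n : ℕ} (h : w.length ≤ n) :
    wcat w x n = x (n - w.length) := by
  rw [wcat, List.getD_eq_default _ _ h]

lemma wcat_add_length (w : List A) (x : ℕ → A) (n : ℕ) : wcat w x (n + w.length) = x n := by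
  rw [wcat_of_le w x (by omega), Nat.add_sub_cancel]

lemma wcat_injective (w : List A) : Injective (wcat w) := fun x y h =>
  funext fun n => by rw [← wcat_add_length w x n, ← wcat_add_length w y n, h]

lemma wcat_append (a b : List A) (x : ℕ → A) : wcat (a ++ b) x = wcat a (wcat b x) := by
  funext n
  rcases lt_or_ge n a.length with h | h
  · rw [wcat_of_lt a _ h, wcat_of_lt _ _ (by simp; omega), List.getElem_append_left h]
  rcases lt_or_ge (n - a.length) b.length with h' | h'
  · rw [wcat_of_le a _ h, wcat_of_lt b _ h', wcat_of_lt _ _ (by simp; omega),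
      List.getElem_append_right h]
  · rw [wcat_of_le a _ h, wcat_of_le b _ h', wcat_of_le _ _ (by simp; omega), List.length_append,
      Nat.sub_add_eq]

lemma wcat_ofFn (x : ℕ → A) (k : ℕ) :
    wcat (List.ofFn fun i : Fin k => x i) (fun n => x (n + k)) = x := by
  funext n
  rcases lt_or_ge n k with h | h
  · rw [wcat_of_lt _ _ (by simpa using h), List.getElem_ofFn]
  · rw [wcat_of_le _ _ (by simpa using h), List.length_ofFn, Nat.sub_add_cancel h]

lemma wcat_mem_cylinder_ofFn (x y : ℕ → A) (k : ℕ) :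
    wcat (List.ofFn fun i : Fin k => x i) y ∈ cylinder x k := fun i hi => by
  rw [wcat_of_lt _ _ (by simpa using hi), List.getElem_ofFn]

lemma isPrefix_of_wcat_eq {v w : List A} {x z : ℕ → A} (h : wcat v x = wcat w z)
    (hlen : v.length ≤ w.length) : v <+: w := by
  rw [List.prefix_iff_eq_take]
  refine List.ext_getElem (by simp [hlen]) fun n hv _ => ?_
  rw [List.getElem_take, ← wcat_of_lt v x hv, ← wcat_of_lt w z (by omega), h]

lemma continuous_wcat [TopologicalSpace A] (w : List A) : Continuous (wcat w) := by
  refine continuous_pi fun n => ?_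
  rcases lt_or_ge n w.length with h | h
  · simp only [wcat_of_lt w _ h]
    exact continuous_const
  · simp only [wcat_of_le w _ h]
    exact continuous_apply _

end Wcat

section Cylinders
variable {A : Type*} {X : Set (ℕ → A)}

lemma mem_CFv_iff {F : Finset (List A)} {v : List A} {y : ℕ → A} :
    y ∈ CFv X F v ↔ wcat v (fun n => y (n + v.length)) = y ∧ y ∈ X ∧
      ∀ f ∈ F, wcat f (fun n => y (n + v.length)) ∈ X := by
  constructor
  · rintro ⟨x, rfl, hX, hF⟩
    have hx : (fun n => wcat v x (n + v.length)) = x := funext (wcat_add_length v x)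
    exact ⟨by rw [hx], hX, by rwa [hx]⟩
  · rintro ⟨hy, hX, hF⟩
    exact ⟨_, hy.symm, hX, hF⟩

lemma CFv_subset (F : Finset (List A)) (v : List A) : CFv X F v ⊆ X :=
  fun _ ⟨_, _, hX, _⟩ => hX

lemma CFv_inter_CFv_append [DecidableEq A] (F G : Finset (List A)) (v u : List A) :
    CFv X F v ∩ CFv X G (v ++ u) = CFv X (G ∪ F.image (· ++ u)) (v ++ u) := by
  ext y
  constructor
  · rintro ⟨⟨x, hxy, hX, hF⟩, ⟨z, rfl, -, hG⟩⟩
    obtain rfl : x = wcat u z := wcat_injective v (by rw [← hxy, wcat_append])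
    refine ⟨z, rfl, hX, fun h hh => ?_⟩
    rcases Finset.mem_union.1 hh with hh | hh
    · exact hG h hh
    · obtain ⟨f, hf, rfl⟩ := Finset.mem_image.1 hh
      rw [wcat_append]
      exact hF f hf
  · rintro ⟨z, rfl, hX, hH⟩
    refine ⟨⟨wcat u z, wcat_append v u z, hX, fun f hf => ?_⟩,
      ⟨z, rfl, hX, fun g hg => hH g (Finset.mem_union_left _ hg)⟩⟩
    rw [← wcat_append]
    exact hH _ (Finset.mem_union_right _ (Finset.mem_image_of_mem _ hf))

lemma CFv_inter_CFv (F G : Finset (List A)) (v w : List A) :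
    CFv X F v ∩ CFv X G w = ∅ ∨ ∃ H u, CFv X F v ∩ CFv X G w = CFv X H u := by
  classical
  rcases (CFv X F v ∩ CFv X G w).eq_empty_or_nonempty with h | ⟨_, ⟨x, rfl, -⟩, ⟨z, hxz, -⟩⟩
  · exact Or.inl h
  right
  rcases le_total v.length w.length with hlen | hlen
  · obtain ⟨u, rfl⟩ := isPrefix_of_wcat_eq hxz hlen
    exact ⟨_, _, CFv_inter_CFv_append F G v u⟩
  · obtain ⟨u, rfl⟩ := isPrefix_of_wcat_eq hxz.symm hlen
    exact ⟨_, _, by rw [Set.inter_comm, CFv_inter_CFv_append G F w u]⟩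

lemma mem_CFv_empty_ofFn {x : ℕ → A} (hx : x ∈ X) (k : ℕ) :
    x ∈ CFv X ∅ (List.ofFn fun i : Fin k => x i) :=
  ⟨_, (wcat_ofFn x k).symm, hx, by simp⟩

lemma CFv_empty_ofFn_subset_cylinder (x : ℕ → A) (k : ℕ) :
    CFv X ∅ (List.ofFn fun i : Fin k => x i) ⊆ cylinder x k := by
  rintro _ ⟨z, rfl, -⟩
  exact wcat_mem_cylinder_ofFn x z k

lemma isClosed_CFv [TopologicalSpace A] [T2Space A] (hX : IsClosed X) (F : Finset (List A))
    (v : List A) : IsClosed (CFv X F v) := by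
  set tail : (ℕ → A) → ℕ → A := fun y n => y (n + v.length)
  have htail : Continuous tail := continuous_pi fun n => continuous_apply _
  have hC : CFv X F v =
      {y | wcat v (tail y) = y} ∩ (X ∩ ⋂ f ∈ F, (wcat f ∘ tail) ⁻¹' X) := by
    ext y
    simp only [mem_CFv_iff, Set.mem_inter_iff, Set.mem_iInter, Set.mem_preimage, comp_apply]
    rfl
  rw [hC]
  exact (isClosed_eq ((continuous_wcat v).comp htail) continuous_id).inter
    (hX.inter (isClosed_biInter fun f _ => hX.preimage ((continuous_wcat f).comp htail)))

end Cylinders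

section Idempotents
variable {A : Type*} {X : Set (ℕ → A)}

def fixedSet (e : PB A) : Set (ℕ → A) := {y | (y, y) ∈ e}

lemma fixedSet_idOn (U : Set (ℕ → A)) : fixedSet (idOn U) = U := by
  ext y
  simp [fixedSet, idOn]

lemma idOn_empty : idOn (∅ : Set (ℕ → A)) = ∅ := by
  ext p
  simp [idOn]

lemma rcomp_idOn_idOn (U V : Set (ℕ → A)) : rcomp (idOn U) (idOn V) = idOn (U ∩ V) := by
  ext ⟨y, z⟩
  simp only [rcomp, idOn, Set.mem_ofPred_eq, Set.mem_inter_iff]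
  constructor
  · rintro ⟨_, ⟨hV, rfl⟩, hU, rfl⟩
    exact ⟨⟨hU, hV⟩, rfl⟩
  · rintro ⟨⟨hU, hV⟩, rfl⟩
    exact ⟨_, ⟨hV, rfl⟩, hU, rfl⟩

lemma fixedSet_of_mem_EXset {e : PB A} (he : e ∈ EXset X) :
    fixedSet e = ∅ ∨ ∃ F v, fixedSet e = CFv X F v := by
  rcases he with rfl | ⟨F, v, rfl⟩
  · exact Or.inl rfl
  · exact Or.inr ⟨F, v, fixedSet_idOn _⟩

lemma idOn_fixedSet {e : PB A} (he : e ∈ EXset X) : idOn (fixedSet e) = e := by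
  rcases he with rfl | ⟨F, v, rfl⟩
  · exact idOn_empty
  · rw [Efv, fixedSet_idOn]

lemma eq_empty_of_fixedSet_eq_empty {e : PB A} (he : e ∈ EXset X) (h : fixedSet e = ∅) :
    e = ∅ := by
  rw [← idOn_fixedSet he, h, idOn_empty]

lemma rcomp_of_mem_EXset {e f : PB A} (he : e ∈ EXset X) (hf : f ∈ EXset X) :
    rcomp e f = idOn (fixedSet e ∩ fixedSet f) :=
  calc rcomp e f = rcomp (idOn (fixedSet e)) (idOn (fixedSet f)) := by
        rw [idOn_fixedSet he, idOn_fixedSet hf]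
    _ = idOn (fixedSet e ∩ fixedSet f) := rcomp_idOn_idOn _ _

lemma fixedSet_rcomp {e f : PB A} (he : e ∈ EXset X) (hf : f ∈ EXset X) :
    fixedSet (rcomp e f) = fixedSet e ∩ fixedSet f := by
  rw [rcomp_of_mem_EXset he hf, fixedSet_idOn]

lemma rcomp_mem_EXset {e f : PB A} (he : e ∈ EXset X) (hf : f ∈ EXset X) :
    rcomp e f ∈ EXset X := by
  rw [rcomp_of_mem_EXset he hf]
  rcases fixedSet_of_mem_EXset he with he' | ⟨F, v, he'⟩
  · rw [he', Set.empty_inter, idOn_empty]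
    exact Or.inl rfl
  rcases fixedSet_of_mem_EXset hf with hf' | ⟨G, w, hf'⟩
  · rw [hf', Set.inter_empty, idOn_empty]
    exact Or.inl rfl
  rw [he', hf']
  rcases CFv_inter_CFv F G v w with h | ⟨H, u, h⟩
  · rw [h, idOn_empty]
    exact Or.inl rfl
  · rw [h]
    exact Or.inr ⟨H, u, rfl⟩

lemma fixedSet_subset {e : PB A} (he : e ∈ EXset X) : fixedSet e ⊆ X := by
  rcases fixedSet_of_mem_EXset he with h | ⟨F, v, h⟩ <;> rw [h]
  · exact Set.empty_subset X
  · exact CFv_subset F v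

lemma isClosed_fixedSet [TopologicalSpace A] [T2Space A] (hX : IsClosed X) {e : PB A}
    (he : e ∈ EXset X) : IsClosed (fixedSet e) := by
  rcases fixedSet_of_mem_EXset he with h | ⟨F, v, h⟩ <;> rw [h]
  · exact isClosed_empty
  · exact isClosed_CFv hX F v

end Idempotents

section Ultrafilters
variable {A : Type*} {X : Set (ℕ → A)}

lemma Efv_mem_etaF {x : ℕ → A} {F : Finset (List A)} {v : List A} (hx : x ∈ CFv X F v) :
    Efv X F v ∈ etaF X x :=
  ⟨Or.inr ⟨F, v, rfl⟩, hx, rfl⟩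

lemma isFilt_etaF {x : ℕ → A} (hx : x ∈ X) : IsFilt X (etaF X x) := by
  refine ⟨⟨_, Efv_mem_etaF (mem_CFv_empty_ofFn hx 0)⟩, fun e he => he.1, fun h => h.2,
    fun e he f hf => ⟨rcomp_mem_EXset he.1 hf.1, ?_⟩, fun e he f hf hef => ⟨hf, ?_⟩⟩
  · change x ∈ fixedSet (rcomp e f)
    rw [fixedSet_rcomp he.1 hf.1]
    exact ⟨he.2, hf.2⟩
  · have hx : x ∈ fixedSet (rcomp e f) := by rw [hef]; exact he.2
    rw [fixedSet_rcomp he.1 hf] at hx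
    exact hx.2

lemma isUltra_etaF [TopologicalSpace A] [DiscreteTopology A] (hX : IsClosed X) {x : ℕ → A}
    (hx : x ∈ X) : IsUltra X (etaF X x) := by
  refine ⟨isFilt_etaF hx, fun ζ ⟨_, hζE, hζ0, hζmul, _⟩ hsub => Set.Subset.antisymm
    (fun e he => ⟨hζE he, ?_⟩) hsub⟩
  by_contra hxe
  obtain ⟨k, hk⟩ := exists_disjoint_cylinder (isClosed_fixedSet hX (hζE he)) hxe
  set w := List.ofFn fun i : Fin k => x i
  have hxk : x ∈ CFv X ∅ w := mem_CFv_empty_ofFn hx k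
  have hek : rcomp e (Efv X ∅ w) = ∅ := by
    rw [rcomp_of_mem_EXset (hζE he) (Efv_mem_etaF hxk).1, Efv, fixedSet_idOn,
      (hk.mono_right (CFv_empty_ofFn_subset_cylinder x k)).inter_eq, idOn_empty]
  exact hζ0 (hek ▸ hζmul e he _ (hsub (Efv_mem_etaF hxk)))

lemma exists_eq_etaF_of_isUltra [TopologicalSpace A] [T2Space A] [CompactSpace A]
    (hX : IsClosed X) {ξ : Set (PB A)} (hξ : IsUltra X ξ) : ∃ x ∈ X, ξ = etaF X x := by
  obtain ⟨⟨hne, hξE, hξ0, hξmul, -⟩, hmax⟩ := hξ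
  obtain ⟨e₀, he₀⟩ := hne
  have : Nonempty ξ := ⟨⟨e₀, he₀⟩⟩
  have hdir : Directed (· ⊇ ·) (fun e : ξ => fixedSet e.1) := fun e f =>
    ⟨⟨rcomp e f, hξmul _ e.2 _ f.2⟩, by
      simp only [fixedSet_rcomp (hξE e.2) (hξE f.2)]
      exact ⟨Set.inter_subset_left, Set.inter_subset_right⟩⟩
  have hnonempty (e : ξ) : (fixedSet e.1).Nonempty :=
    Set.nonempty_iff_ne_empty.2 fun h => hξ0 (eq_empty_of_fixedSet_eq_empty (hξE e.2) h ▸ e.2)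
  obtain ⟨x, hx⟩ := IsCompact.nonempty_iInter_of_directed_nonempty_isCompact_isClosed _ hdir
    hnonempty (fun e => (isClosed_fixedSet hX (hξE e.2)).isCompact)
    (fun e => isClosed_fixedSet hX (hξE e.2))
  rw [Set.mem_iInter] at hx
  have hxX : x ∈ X := fixedSet_subset (hξE he₀) (hx ⟨e₀, he₀⟩)
  exact ⟨x, hxX, (hmax _ (isFilt_etaF hxX) fun e he => ⟨hξE he, hx ⟨e, he⟩⟩).symm⟩

end Ultrafilters

theorem stmt12_general {A : Type*} [Fintype A] [TopologicalSpace A] [DiscreteTopology A]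
    (X : Set (ℕ → A)) (hXcl : IsClosed X) :
    (∀ x ∈ X, IsUltra X (etaF X x)) ∧
    (∀ ξ, IsUltra X ξ → ∃ x ∈ X, ξ = etaF X x) :=
  ⟨fun _ hx => isUltra_etaF hXcl hx, fun _ hξ => exists_eq_etaF_of_isUltra hXcl hξ⟩

theorem stmt12 {A : Type*} [Fintype A] [TopologicalSpace A] [DiscreteTopology A]
    (X : Set (ℕ → A)) (hXcl : IsClosed X) (hXsh : ∀ x ∈ X, shft x ∈ X) :
    (∀ x ∈ X, IsUltra X (etaF X x)) ∧
    (∀ ξ, IsUltra X ξ → ∃ x ∈ X, ξ = etaF X x) :=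
  stmt12_general X hXcl
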